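/- arXiv:2203.13960 — 2 statements merged into one kernel-verified Lean document; each statement's English description precedes it below -/
import Mathlib

section
/- Let u ∈ C²(ℝ³) solve Δu = W'(u) with ∂u/∂z > 0 and ½|∇u|² = W(u), for smooth W : ℝ → [0,∞). If ψ : ℝ³ → ℝ satisfies ψ_y = u_x/u_z and ψ_x = −u_y/u_z, then ψ satisfies the minimal surface equation ψ_yy(ψ_x² + 1) − 2ψ_x ψ_y ψ_xy + ψ_xx(ψ_y² + 1) = 0 in the variables (x,y). -/
noncomputable def pd {n : ℕ} (i : Fin n) (f : (Fin n → ℝ) → ℝ) (x : Fin n → ℝ) : ℝ :=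
  fderiv ℝ f x (Pi.single i 1)

noncomputable def lap {n : ℕ} (f : (Fin n → ℝ) → ℝ) (x : Fin n → ℝ) : ℝ :=
  ∑ j, pd j (pd j f) x

section Aux
variable {n : ℕ} {f g : (Fin n → ℝ) → ℝ}

lemma contDiff_pd (i : Fin n) (hf : ContDiff ℝ (⊤ : ℕ∞) f) : ContDiff ℝ (⊤ : ℕ∞) (pd i f) :=
  (hf.fderiv_right (by simp)).clm_apply contDiff_const

lemma diff_pd (i : Fin n) (hf : ContDiff ℝ (⊤ : ℕ∞) f) : Differentiable ℝ (pd i f) :=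
  (contDiff_pd i hf).differentiable (by simp)

lemma pd_mul (i : Fin n) (hf : Differentiable ℝ f) (hg : Differentiable ℝ g) (x) :
    pd i (fun y => f y * g y) x = pd i f x * g x + f x * pd i g x := by
  unfold pd
  rw [fderiv_fun_mul (hf x) (hg x)]
  simp [mul_comm]
  ring

lemma pd_add (i : Fin n) (hf : Differentiable ℝ f) (hg : Differentiable ℝ g) (x) :
    pd i (fun y => f y + g y) x = pd i f x + pd i g x := by
  unfold pd
  rw [fderiv_fun_add (hf x) (hg x)]
  simp

lemma pd_neg (i : Fin n) (x) :
    pd i (fun y => -(f y)) x = -pd i f x := by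
  unfold pd
  rw [fderiv_fun_neg]
  simp

lemma pd_const_mul (i : Fin n) (c : ℝ) (hf : Differentiable ℝ f) (x) :
    pd i (fun y => c * f y) x = c * pd i f x := by
  unfold pd
  rw [fderiv_const_mul (hf x) c]
  simp

lemma pd_comm (i j : Fin n) (hf : ContDiff ℝ (⊤ : ℕ∞) f) (x) :
    pd i (pd j f) x = pd j (pd i f) x := by
  have hdf : Differentiable ℝ f := hf.differentiable (by simp)
  have h2 : ContDiff ℝ (⊤ : ℕ∞) (fderiv ℝ f) := hf.fderiv_right (by simp)
  have hx : HasFDerivAt (fderiv ℝ f) (fderiv ℝ (fderiv ℝ f) x) x :=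
    ((h2.differentiable (by simp)) x).hasFDerivAt
  have hsymm := second_derivative_symmetric (fun y => (hdf y).hasFDerivAt) hx
  have key : ∀ (k l : Fin n), pd k (pd l f) x
      = fderiv ℝ (fderiv ℝ f) x (Pi.single k 1) (Pi.single l 1) := by
    intro k l
    unfold pd
    rw [fderiv_clm_apply ((h2.differentiable (by simp)) x) (differentiableAt_const _)]
    simp
  rw [key, key, hsymm]

lemma pd_comp_scalar (i : Fin n) {W : ℝ → ℝ} {u : (Fin n → ℝ) → ℝ}
    (hW : ContDiff ℝ (⊤ : ℕ∞) W) (hu : ContDiff ℝ (⊤ : ℕ∞) u) (x) :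
    pd i (fun y => W (u y)) x = deriv W (u x) * pd i u x := by
  unfold pd
  rw [show (fun y => W (u y)) = W ∘ u from rfl,
    fderiv_comp x ((hW.differentiable (by simp)) (u x)) ((hu.differentiable (by simp)) x)]
  simp [ContinuousLinearMap.comp_apply, fderiv_eq_smul_deriv, smul_eq_mul, mul_comm]

lemma pd_half_sumsq (i : Fin n) {f0 f1 f2 : (Fin n → ℝ) → ℝ}
    (h0 : Differentiable ℝ f0) (h1 : Differentiable ℝ f1) (h2 : Differentiable ℝ f2) (x) :
    pd i (fun y => (1/2 : ℝ) * (f0 y * f0 y + (f1 y * f1 y + f2 y * f2 y))) x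
      = f0 x * pd i f0 x + f1 x * pd i f1 x + f2 x * pd i f2 x := by
  rw [pd_const_mul i _ (f := fun y => f0 y * f0 y + (f1 y * f1 y + f2 y * f2 y)) (((h0.mul h0).add ((h1.mul h1).add (h2.mul h2)))) x,
    pd_add i (f := fun y => f0 y * f0 y) (g := fun y => f1 y * f1 y + f2 y * f2 y) (h0.mul h0) ((h1.mul h1).add (h2.mul h2)),
    pd_add i (f := fun y => f1 y * f1 y) (g := fun y => f2 y * f2 y) (h1.mul h1) (h2.mul h2),
    pd_mul i h0 h0, pd_mul i h1 h1, pd_mul i h2 h2]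
  ring

lemma alg (p q r a b c d e f Y2 XY X2 : ℝ) (hr : 0 < r)
    (h1 : p*a + q*d + r*e = (a+b+c)*p)
    (h2 : p*d + q*b + r*f = (a+b+c)*q)
    (h3 : p*e + q*f + r*c = (a+b+c)*r)
    (hyy : Y2*r + (p/r)*f = d)
    (hxy : XY*r + (p/r)*e = a)
    (hxx : X2*r + (-(q/r))*e = -d) :
    Y2*((-(q/r))^2+1) - 2*(-(q/r))*(p/r)*XY + X2*((p/r)^2+1) = 0 := by
  have hr' : r ≠ 0 := hr.ne'
  have hN : r*(d*r*(q^2-p^2) - p*f*(q^2+r^2) + 2*p*q*r*a + q*e*(r^2-p^2)) = 0 := by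
    linear_combination (q*r^2)*h1 - (p*r^2)*h2 - (p*q*r)*h3
  have hN0 : d*r*(q^2-p^2) - p*f*(q^2+r^2) + 2*p*q*r*a + q*e*(r^2-p^2) = 0 :=
    (mul_eq_zero.mp hN).resolve_left hr'
  have hY2 : Y2 = (d*r - p*f)/r^2 := by field_simp at hyy ⊢; linarith
  have hXY : XY = (a*r - p*e)/r^2 := by field_simp at hxy ⊢; linarith
  have hX2 : X2 = (q*e - d*r)/r^2 := by field_simp at hxx ⊢; linarith
  rw [hY2, hXY, hX2]
  calc _ = (d*r*(q^2-p^2) - p*f*(q^2+r^2) + 2*p*q*r*a + q*e*(r^2-p^2)) / r^4 := by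
        field_simp; ring
    _ = 0 := by rw [hN0, zero_div]

end Aux

/-- Coordinates: `0 = x`, `1 = y`, `2 = z`. -/
theorem stmt_6 (W : ℝ → ℝ) (hW : ContDiff ℝ (⊤ : ℕ∞) W) (hWnonneg : ∀ t, 0 ≤ W t)
    (u : (Fin 3 → ℝ) → ℝ) (hu : ContDiff ℝ (⊤ : ℕ∞) u)
    (hAC : ∀ x, lap u x = deriv W (u x))
    (hmono : ∀ x, 0 < pd 2 u x)
    (hequi : ∀ x, (1 / 2) * ∑ j, (pd j u x) ^ 2 = W (u x))
    (ψ : (Fin 3 → ℝ) → ℝ) (hψ : ContDiff ℝ (⊤ : ℕ∞) ψ)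
    (hψy : ∀ x, pd 1 ψ x = pd 0 u x / pd 2 u x)
    (hψx : ∀ x, pd 0 ψ x = -(pd 1 u x / pd 2 u x)) :
    ∀ x, pd 1 (pd 1 ψ) x * ((pd 0 ψ x) ^ 2 + 1)
        - 2 * pd 0 ψ x * pd 1 ψ x * pd 0 (pd 1 ψ) x
        + pd 0 (pd 0 ψ) x * ((pd 1 ψ x) ^ 2 + 1) = 0 := by
  intro x
  have d0 := diff_pd (0 : Fin 3) hu
  have d1 := diff_pd (1 : Fin 3) hu
  have d2 := diff_pd (2 : Fin 3) hu
  have dψ0 := diff_pd (0 : Fin 3) hψ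
  have dψ1 := diff_pd (1 : Fin 3) hψ
  have hr : ∀ y, pd 2 u y ≠ 0 := fun y => (hmono y).ne'
  -- equipartition derivative
  have hfe : (fun y => (1/2 : ℝ) *
      (pd 0 u y * pd 0 u y + (pd 1 u y * pd 1 u y + pd 2 u y * pd 2 u y)))
      = fun y => W (u y) := by
    funext y
    rw [← hequi y, Fin.sum_univ_three]
    ring
  have hequiD : ∀ i : Fin 3,
      pd 0 u x * pd i (pd 0 u) x + pd 1 u x * pd i (pd 1 u) x
        + pd 2 u x * pd i (pd 2 u) x = deriv W (u x) * pd i u x := by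
    intro i
    have h := congrArg (fun F => pd i F x) hfe
    rw [pd_half_sumsq i d0 d1 d2 x, pd_comp_scalar i hW hu x] at h
    exact h
  -- Allen–Cahn
  have hACx : deriv W (u x)
      = pd 0 (pd 0 u) x + pd 1 (pd 1 u) x + pd 2 (pd 2 u) x := by
    rw [← hAC x]
    simp [lap, Fin.sum_univ_three]
  -- relations for ψ
  have hyfun : (fun y => pd 1 ψ y * pd 2 u y) = pd 0 u := by
    funext y
    rw [hψy y, div_mul_cancel₀ _ (hr y)]
  have hxfun : (fun y => pd 0 ψ y * pd 2 u y) = fun y => -(pd 1 u y) := by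
    funext y
    rw [hψx y, neg_mul, div_mul_cancel₀ _ (hr y)]
  have hψD : ∀ i : Fin 3,
      pd i (pd 1 ψ) x * pd 2 u x + pd 1 ψ x * pd i (pd 2 u) x = pd i (pd 0 u) x := by
    intro i
    have h := congrArg (fun F => pd i F x) hyfun
    rw [pd_mul i dψ1 d2 x] at h
    exact h
  have hψDx : ∀ i : Fin 3,
      pd i (pd 0 ψ) x * pd 2 u x + pd 0 ψ x * pd i (pd 2 u) x = -pd i (pd 1 u) x := by
    intro i
    have h := congrArg (fun F => pd i F x) hxfun
    rw [pd_mul i dψ0 d2 x, pd_neg i (f := pd 1 u) x] at h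
    exact h
  have c01 : pd 1 (pd 0 u) x = pd 0 (pd 1 u) x := pd_comm 1 0 hu x
  have c02 : pd 2 (pd 0 u) x = pd 0 (pd 2 u) x := pd_comm 2 0 hu x
  have c12 : pd 2 (pd 1 u) x = pd 1 (pd 2 u) x := pd_comm 2 1 hu x
  have e0 := hequiD 0
  have e1 := hequiD 1
  have e2 := hequiD 2
  rw [hACx] at e0 e1 e2
  rw [c01] at e1
  rw [c02, c12] at e2
  have hy1 := hψD 1
  rw [hψy x, c01] at hy1
  have hy0 := hψD 0
  rw [hψy x] at hy0
  have hx0 := hψDx 0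
  rw [hψx x] at hx0
  rw [hψx x, hψy x]
  exact alg (pd 0 u x) (pd 1 u x) (pd 2 u x)
    (pd 0 (pd 0 u) x) (pd 1 (pd 1 u) x) (pd 2 (pd 2 u) x)
    (pd 0 (pd 1 u) x) (pd 0 (pd 2 u) x) (pd 1 (pd 2 u) x)
    (pd 1 (pd 1 ψ) x) (pd 0 (pd 1 ψ) x) (pd 0 (pd 0 ψ) x) (hmono x)
    (by linear_combination e0) (by linear_combination e1) (by linear_combination e2)
    (by linear_combination hy1) (by linear_combination hy0) (by linear_combination hx0)
end

section
/- In the setting of the previous theorem (u = Φ(v), both solving the stated quasilinear equations, with p ≠ 0 and |∇v|² = G(v)), the divergence condition Σ_{i=1}^{n−1} ∂F_i/∂x_i = 0 holds if and only if Φ satisfies the ODE a(Φ(t))Φ'(t)G'(t) + 2[b(Φ(t))(Φ'(t))² + a(Φ(t))Φ''(t)]G(t) = 2f(Φ(t)) for all t in the range of v. -/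
open scoped ContDiff
open Filter

variable {m : ℕ}

lemma pd_contDiff {F : (Fin m → ℝ) → ℝ} (hF : ContDiff ℝ ∞ F) (i : Fin m) :
    ContDiff ℝ ∞ (pd i F) := by
  unfold pd
  exact (hF.fderiv_right le_rfl).clm_apply contDiff_const

lemma pd_congr_nhds {F G : (Fin m → ℝ) → ℝ} {x : Fin m → ℝ} (h : F =ᶠ[nhds x] G) (i : Fin m) :
    pd i F x = pd i G x := by unfold pd; rw [h.fderiv_eq]

lemma fderiv_apply_eq {φ : ℝ → ℝ} {t r : ℝ} : fderiv ℝ φ t r = r * deriv φ t := by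
  rw [← toSpanSingleton_deriv, ContinuousLinearMap.toSpanSingleton_apply]
  simp [smul_eq_mul]

lemma pd_comp {φ : ℝ → ℝ} {v : (Fin m → ℝ) → ℝ} {x : Fin m → ℝ}
    (hφ : DifferentiableAt ℝ φ (v x)) (hv : DifferentiableAt ℝ v x) (i : Fin m) :
    pd i (fun y => φ (v y)) x = deriv φ (v x) * pd i v x := by
  unfold pd
  rw [show (fun y => φ (v y)) = φ ∘ v from rfl, fderiv_comp (x := x) hφ hv,
    ContinuousLinearMap.comp_apply, fderiv_apply_eq, mul_comm]

lemma pd_mul_s9 {F G : (Fin m → ℝ) → ℝ} {x : Fin m → ℝ} (hF : DifferentiableAt ℝ F x)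
    (hG : DifferentiableAt ℝ G x) (i : Fin m) :
    pd i (fun y => F y * G y) x = pd i F x * G x + F x * pd i G x := by
  unfold pd
  rw [fderiv_fun_mul hF hG]
  simp [smul_eq_mul]
  ring

lemma pd_div {F G : (Fin m → ℝ) → ℝ} {x : Fin m → ℝ} (hF : DifferentiableAt ℝ F x)
    (hG : DifferentiableAt ℝ G x) (hGx : G x ≠ 0) (i : Fin m) :
    pd i (fun y => F y / G y) x = (pd i F x * G x - F x * pd i G x) / G x ^ 2 := by
  have hGi : DifferentiableAt ℝ (fun y => (G y)⁻¹) x := hG.inv hGx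
  have h1 : pd i (fun y => (G y)⁻¹) x = -(G x ^ 2)⁻¹ * pd i G x := by
    have h := pd_comp (φ := fun t : ℝ => t⁻¹) (v := G) (differentiableAt_inv hGx) hG i
    rw [h, deriv_inv]
  have h2 : (fun y => F y / G y) = fun y => F y * (G y)⁻¹ := by
    funext y; rw [div_eq_mul_inv]
  rw [h2, pd_mul_s9 hF hGi i, h1]
  field_simp
  ring

lemma pd_symm {F : (Fin m → ℝ) → ℝ} (hF : ContDiff ℝ ∞ F) (i j : Fin m) (x : Fin m → ℝ) :
    pd i (pd j F) x = pd j (pd i F) x := by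
  have hdF : Differentiable ℝ F := hF.differentiable (by simp)
  have hdF' : DifferentiableAt ℝ (fderiv ℝ F) x :=
    ((hF.fderiv_right (m := ∞) le_rfl).differentiable (by simp)) x
  have key : ∀ w z : Fin m → ℝ, fderiv ℝ (fun y => fderiv ℝ F y w) x z
      = fderiv ℝ (fderiv ℝ F) x z w := by
    intro w z
    have h : fderiv ℝ (fun y => (fderiv ℝ F y) w) x
        = (fderiv ℝ (fderiv ℝ F) x).flip w := by
      have h := fderiv_clm_apply (𝕜 := ℝ) hdF' (differentiableAt_const w)
      simpa using h
    rw [h]; rfl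
  unfold pd
  rw [key, key]
  exact second_derivative_symmetric (fun y => (hdF y).hasFDerivAt) hdF'.hasFDerivAt _ _

lemma pd_sum {ι : Type*} (s : Finset ι) (A : ι → (Fin m → ℝ) → ℝ) {x : Fin m → ℝ}
    (h : ∀ j ∈ s, DifferentiableAt ℝ (A j) x) (i : Fin m) :
    pd i (fun y => ∑ j ∈ s, A j y) x = ∑ j ∈ s, pd i (A j) x := by
  unfold pd
  rw [fderiv_fun_sum h]
  simp
theorem stmt_9 {n : ℕ} (hn : 1 ≤ n) (Ω : Set (Fin (n + 1) → ℝ)) (hΩ : IsOpen Ω)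
    (a b f k l g Φ : ℝ → ℝ)
    (ha : ContDiff ℝ (⊤ : ℕ∞) a) (hb : ContDiff ℝ (⊤ : ℕ∞) b) (hf : ContDiff ℝ (⊤ : ℕ∞) f)
    (hk : ContDiff ℝ (⊤ : ℕ∞) k) (hl : ContDiff ℝ (⊤ : ℕ∞) l) (hg : ContDiff ℝ (⊤ : ℕ∞) g)
    (hΦ : ContDiff ℝ (⊤ : ℕ∞) Φ)
    (hΦ' : ∀ t, deriv Φ t ≠ 0) (ha0 : ∀ t, a t ≠ 0)
    (p : ℝ → ℝ)
    (hp : ∀ t, p t = k t * a (Φ t) * deriv (deriv Φ) t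
        + k t * b (Φ t) * (deriv Φ t) ^ 2 - l t * a (Φ t) * deriv Φ t)
    (hp0 : ∀ t, p t ≠ 0)
    (u v : (Fin (n + 1) → ℝ) → ℝ) (hu : ContDiff ℝ (⊤ : ℕ∞) u) (hv : ContDiff ℝ (⊤ : ℕ∞) v)
    (hum : ∀ x ∈ Ω, 0 < pd (Fin.last n) u x)
    (hvm : ∀ x ∈ Ω, 0 < pd (Fin.last n) v x)
    (huv : ∀ x, u x = Φ (v x))
    (hequ : ∀ x ∈ Ω, a (u x) * lap u x + b (u x) * ∑ j, (pd j u x) ^ 2 = f (u x))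
    (heqv : ∀ x ∈ Ω, k (v x) * lap v x + l (v x) * ∑ j, (pd j v x) ^ 2 = g (v x))
    (G : ℝ → ℝ)
    (hG : ∀ t, G t = (k t * f (Φ t) - g t * a (Φ t) * deriv Φ t) / p t)
    (F : Fin n → (Fin (n + 1) → ℝ) → ℝ)
    (hF : ∀ i x, F i x = pd (Fin.castSucc i) u x / pd (Fin.last n) u x) :
    (∀ x ∈ Ω, (∑ i : Fin n, pd (Fin.castSucc i) (F i) x) = 0) ↔
      (∀ t ∈ v '' Ω, a (Φ t) * deriv Φ t * deriv G t
          + 2 * (b (Φ t) * (deriv Φ t) ^ 2 + a (Φ t) * deriv (deriv Φ) t) * G t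
          = 2 * f (Φ t)) := by
  have hΦI : ContDiff ℝ ∞ Φ := hΦ.of_le (by simp)
  have hvI : ContDiff ℝ ∞ v := hv.of_le (by simp)
  have hΦ1 : ContDiff ℝ ∞ (deriv Φ) := (contDiff_infty_iff_deriv.mp hΦI).2
  have hΦ2 : ContDiff ℝ ∞ (deriv (deriv Φ)) := (contDiff_infty_iff_deriv.mp hΦ1).2
  have hΦd : Differentiable ℝ Φ := hΦI.differentiable (by simp)
  have hΦ1d : Differentiable ℝ (deriv Φ) := hΦ1.differentiable (by simp)
  have hvd : Differentiable ℝ v := hvI.differentiable (by simp)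
  have hpdvd : ∀ j, Differentiable ℝ (pd j v) := fun j =>
    (pd_contDiff hvI j).differentiable (by simp)
  have hueq : u = fun y => Φ (v y) := funext huv
  have hu' : ∀ j x, pd j u x = deriv Φ (v x) * pd j v x := by
    intro j x
    rw [hueq]
    exact pd_comp (hΦd (v x)) (hvd x) j
  set S : (Fin (n + 1) → ℝ) → ℝ := fun y => ∑ j, (pd j v y) ^ 2 with hSdef
  have hS0 : ∀ x, S x = ∑ j, (pd j v x) ^ 2 := fun x => rfl
  have hu'' : ∀ (j) (x : Fin (n + 1) → ℝ), pd j (pd j u) x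
      = deriv (deriv Φ) (v x) * pd j v x * pd j v x + deriv Φ (v x) * pd j (pd j v) x := by
    intro j x
    have h1 : pd j u = fun y => deriv Φ (v y) * pd j v y := funext (fun y => hu' j y)
    have hc : DifferentiableAt ℝ (fun y => deriv Φ (v y)) x := (hΦ1d (v x)).comp x (hvd x)
    rw [h1, pd_mul_s9 hc (hpdvd j x) j, pd_comp (hΦ1d (v x)) (hvd x) j]
  have hlapu : ∀ x, lap u x = deriv (deriv Φ) (v x) * S x + deriv Φ (v x) * lap v x := by
    intro x
    have h1 : lap u x = ∑ j, (deriv (deriv Φ) (v x) * pd j v x * pd j v x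
        + deriv Φ (v x) * pd j (pd j v) x) :=
      Finset.sum_congr rfl fun j _ => hu'' j x
    have hlv : lap v x = ∑ j, pd j (pd j v) x := rfl
    rw [h1, Finset.sum_add_distrib, hS0, hlv, Finset.mul_sum, Finset.mul_sum]
    congr 1
    exact Finset.sum_congr rfl fun j _ => by ring
  have hsq : ∀ x, (∑ j, (pd j u x) ^ 2) = (deriv Φ (v x)) ^ 2 * S x := by
    intro x
    rw [hS0, Finset.mul_sum]
    exact Finset.sum_congr rfl fun j _ => by rw [hu']; ring
  have hSx : ∀ x ∈ Ω, S x = G (v x) := by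
    intro x hx
    have e1 := hequ x hx
    rw [huv x, hsq x, hlapu x] at e1
    have e2 := heqv x hx
    rw [← hS0 x] at e2
    rw [hG (v x), eq_div_iff (hp0 (v x)), hp (v x)]
    linear_combination k (v x) * e1 - a (Φ (v x)) * deriv Φ (v x) * e2
  have hlapv : ∀ x ∈ Ω, lap v x = (f (Φ (v x))
      - (a (Φ (v x)) * deriv (deriv Φ) (v x) + b (Φ (v x)) * (deriv Φ (v x)) ^ 2) * G (v x))
      / (a (Φ (v x)) * deriv Φ (v x)) := by
    intro x hx
    have e1 := hequ x hx
    rw [huv x, hsq x, hlapu x, hSx x hx] at e1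
    rw [eq_div_iff (mul_ne_zero (ha0 _) (hΦ' _))]
    linear_combination e1
  have hpC : ContDiff ℝ ∞ p := by
    have hpe : p = fun t => k t * a (Φ t) * deriv (deriv Φ) t
        + k t * b (Φ t) * (deriv Φ t) ^ 2 - l t * a (Φ t) * deriv Φ t := funext hp
    rw [hpe]
    exact ((((hk.of_le (by simp)).mul ((ha.of_le (by simp)).comp hΦI)).mul hΦ2).add
      (((hk.of_le (by simp)).mul ((hb.of_le (by simp)).comp hΦI)).mul (hΦ1.pow 2))).sub
      (((hl.of_le (by simp)).mul ((ha.of_le (by simp)).comp hΦI)).mul hΦ1)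
  have hGC : ContDiff ℝ ∞ G := by
    have hGe : G = fun t => (k t * f (Φ t) - g t * a (Φ t) * deriv Φ t) / p t := funext hG
    rw [hGe]
    exact ContDiff.div (((hk.of_le (by simp)).mul ((hf.of_le (by simp)).comp hΦI)).sub
      (((hg.of_le (by simp)).mul ((ha.of_le (by simp)).comp hΦI)).mul hΦ1)) hpC hp0
  have hGd : Differentiable ℝ G := hGC.differentiable (by simp)
  have hpdS : ∀ x ∈ Ω, pd (Fin.last n) S x = deriv G (v x) * pd (Fin.last n) v x := by
    intro x hx
    have hev : S =ᶠ[nhds x] fun y => G (v y) := by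
      filter_upwards [hΩ.mem_nhds hx] with y hy
      exact hSx y hy
    rw [pd_congr_nhds hev, pd_comp (hGd (v x)) (hvd x)]
  have hpdS2 : ∀ x, pd (Fin.last n) S x
      = ∑ j, 2 * (pd j v x * pd (Fin.last n) (pd j v) x) := by
    intro x
    have h2 : pd (Fin.last n) S x = ∑ j, pd (Fin.last n) (fun y => (pd j v y) ^ 2) x := by
      exact pd_sum Finset.univ (fun j y => (pd j v y) ^ 2)
        (fun j _ => ((hpdvd j) x).pow 2) (Fin.last n)
    rw [h2]
    refine Finset.sum_congr rfl fun j _ => ?_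
    have h3 : (fun y => (pd j v y) ^ 2) = fun y => pd j v y * pd j v y := by
      funext y; ring
    rw [h3, pd_mul_s9 ((hpdvd j) x) ((hpdvd j) x)]
    ring
  have hFeq : ∀ i : Fin n, F i = fun y => pd (Fin.castSucc i) v y / pd (Fin.last n) v y := by
    intro i; funext y
    rw [hF i y, hu' (Fin.castSucc i) y, hu' (Fin.last n) y,
      mul_div_mul_left _ _ (hΦ' (v y))]
  have key : ∀ x ∈ Ω, ((∑ i : Fin n, pd (Fin.castSucc i) (F i) x) = 0 ↔
      a (Φ (v x)) * deriv Φ (v x) * deriv G (v x)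
        + 2 * (b (Φ (v x)) * (deriv Φ (v x)) ^ 2 + a (Φ (v x)) * deriv (deriv Φ) (v x))
          * G (v x)
        = 2 * f (Φ (v x))) := by
    intro x hx
    have hvn : pd (Fin.last n) v x ≠ 0 := (hvm x hx).ne'
    have hA : a (Φ (v x)) ≠ 0 := ha0 _
    have hP : deriv Φ (v x) ≠ 0 := hΦ' _
    have hsum1 : ∀ i : Fin n, pd (Fin.castSucc i) (F i) x
        = (pd (Fin.castSucc i) (pd (Fin.castSucc i) v) x * pd (Fin.last n) v x
          - pd (Fin.castSucc i) v x * pd (Fin.last n) (pd (Fin.castSucc i) v) x)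
          / (pd (Fin.last n) v x) ^ 2 := by
      intro i
      rw [hFeq i, pd_div ((hpdvd _) x) ((hpdvd _) x) hvn,
        pd_symm hvI (Fin.castSucc i) (Fin.last n) x]
    have hlapsplit : lap v x
        = (∑ i : Fin n, pd (Fin.castSucc i) (pd (Fin.castSucc i) v) x)
          + pd (Fin.last n) (pd (Fin.last n) v) x := by
      rw [show lap v x = ∑ j, pd j (pd j v) x from rfl, Fin.sum_univ_castSucc]
    have hpdSsplit : pd (Fin.last n) S x
        = 2 * (∑ i : Fin n, pd (Fin.castSucc i) v x * pd (Fin.last n) (pd (Fin.castSucc i) v) x)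
          + 2 * (pd (Fin.last n) v x * pd (Fin.last n) (pd (Fin.last n) v) x) := by
      rw [hpdS2 x, Fin.sum_univ_castSucc, ← Finset.mul_sum]
    have hsig1 : (∑ i : Fin n, pd (Fin.castSucc i) (F i) x)
        = (2 * lap v x * pd (Fin.last n) v x - pd (Fin.last n) S x)
          / (2 * (pd (Fin.last n) v x) ^ 2) := by
      rw [Finset.sum_congr rfl fun i _ => hsum1 i, ← Finset.sum_div,
        Finset.sum_sub_distrib, ← Finset.sum_mul, hlapsplit, hpdSsplit]
      field_simp
      ring
    have hsig2 : (∑ i : Fin n, pd (Fin.castSucc i) (F i) x)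
        = (2 * f (Φ (v x)) - (a (Φ (v x)) * deriv Φ (v x) * deriv G (v x)
            + 2 * (b (Φ (v x)) * (deriv Φ (v x)) ^ 2
              + a (Φ (v x)) * deriv (deriv Φ) (v x)) * G (v x)))
          / (2 * (a (Φ (v x)) * deriv Φ (v x)) * pd (Fin.last n) v x) := by
      rw [hsig1, hpdS x hx, hlapv x hx]
      field_simp
      ring
    rw [hsig2]
    have hden : 2 * (a (Φ (v x)) * deriv Φ (v x)) * pd (Fin.last n) v x ≠ 0 :=
      mul_ne_zero (mul_ne_zero two_ne_zero (mul_ne_zero hA hP)) hvn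
    rw [div_eq_zero_iff, or_iff_left hden, sub_eq_zero]
    exact eq_comm
  constructor
  · rintro h t ⟨x, hx, rfl⟩
    exact (key x hx).mp (h x hx)
  · intro h x hx
    exact (key x hx).mpr (h (v x) ⟨x, hx, rfl⟩)
end
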